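/- Helical symmetry is equivalent to x₃-independence in the straightened frame: with the helix tubular map Φ(x) = γ(x₃) + x₁ n(x₃) + x₂ b(x₃) (for γ(s) = (cos s, sin s, s)), Jacobian J = ∇Φ and determinant 𝔇 = det J = (2-x₁)/√2, define Q_Φ η(y) = 𝔇^{-1} J η(Φ^{-1}(y)). Then: if a vector field η on the straightened tube does not depend on x₃, the field Q_Φ η is helical; conversely, if ω is helical, then Q_Φ^{-1} ω is independent of x₃. -/

import Mathlib

open MeasureTheory Real
open scoped ENNReal NNReal

noncomputable section

abbrev E3 := EuclideanSpace ℝ (Fin 3)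

def mk3 (a b c : ℝ) : E3 := (WithLp.equiv 2 (Fin 3 → ℝ)).symm ![a, b, c]

/-- Rotation by angle `θ` around the `x₃`-axis. -/
def Rot (θ : ℝ) (y : E3) : E3 :=
  mk3 (Real.cos θ * y 0 - Real.sin θ * y 1) (Real.sin θ * y 0 + Real.cos θ * y 1) (y 2)

/-- The screw motion `S_θ`. -/
def Scr (θ : ℝ) (y : E3) : E3 :=
  mk3 (Real.cos θ * y 0 - Real.sin θ * y 1) (Real.sin θ * y 0 + Real.cos θ * y 1) (y 2 + θ)

/-- The helix `γ(s) = (cos s, sin s, s)`. -/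
def helix (s : ℝ) : E3 := mk3 (Real.cos s) (Real.sin s) s

/-- Tangent vector `t(s) = (1/√2)(-sin s, cos s, 1)`. -/
def tvec (s : ℝ) : E3 := (Real.sqrt 2)⁻¹ • mk3 (-Real.sin s) (Real.cos s) 1

/-- Normal vector `n(s) = (-cos s, -sin s, 0)`. -/
def nvec (s : ℝ) : E3 := mk3 (-Real.cos s) (-Real.sin s) 0

/-- Binormal vector `b(s) = (1/√2)(sin s, -cos s, 1)`. -/
def bvec (s : ℝ) : E3 := (Real.sqrt 2)⁻¹ • mk3 (Real.sin s) (-Real.cos s) 1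

/-- The tubular-coordinate map `Φ(x) = γ(x₃) + x₁ n(x₃) + x₂ b(x₃)`. -/
def Phi (x : E3) : E3 := helix (x 2) + x 0 • nvec (x 2) + x 1 • bvec (x 2)

/-- The Jacobian matrix `J = ∇Φ = [n | b | ((2-x₁)/√2) t + (-x₂/√2) n + (x₁/√2) b]`. -/
def Jh (x : E3) : Matrix (Fin 3) (Fin 3) ℝ :=
  Matrix.of fun i j =>
    (![nvec (x 2), bvec (x 2),
        ((2 - x 0) / Real.sqrt 2) • tvec (x 2) + (-(x 1) / Real.sqrt 2) • nvec (x 2) +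
          (x 0 / Real.sqrt 2) • bvec (x 2)] j) i

/-- The Jacobian determinant `𝔇 = (2 - x₁)/√2`. -/
def Dh (x : E3) : ℝ := (2 - x 0) / Real.sqrt 2

/-- The vorticity transformation `Q_Φ η (y) = 𝔇⁻¹ J η(Φ⁻¹ y)`, with `Ψ` denoting `Φ⁻¹`. -/
def Qmap (Psi : E3 → E3) (η : E3 → E3) (y : E3) : E3 :=
  (WithLp.equiv 2 (Fin 3 → ℝ)).symm
    ((Dh (Psi y))⁻¹ • (Jh (Psi y)).mulVec (WithLp.equiv 2 (Fin 3 → ℝ) (η (Psi y))))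

/-- The inverse vorticity transformation `Q_Φ⁻¹ ω (x) = 𝔇 J⁻¹ ω(Φ x)`. -/
def Qinv (ω : E3 → E3) (x : E3) : E3 :=
  (WithLp.equiv 2 (Fin 3 → ℝ)).symm
    (Dh x • (Jh x)⁻¹.mulVec (WithLp.equiv 2 (Fin 3 → ℝ) (ω (Phi x))))

/-- The straightened tube `Σ_r = {|x̃| < 32r}`. -/
def SigmaTube (r : ℝ) : Set E3 := {x : E3 | (x 0) ^ 2 + (x 1) ^ 2 < (32 * r) ^ 2}

@[simp] lemma mk3_zero (a b c : ℝ) : mk3 a b c 0 = a := rfl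
@[simp] lemma mk3_one (a b c : ℝ) : mk3 a b c 1 = b := rfl
@[simp] lemma mk3_two (a b c : ℝ) : mk3 a b c 2 = c := rfl
@[simp] lemma E3_add_apply (u v : E3) (i : Fin 3) : (u + v) i = u i + v i := rfl
@[simp] lemma E3_smul_apply (c : ℝ) (v : E3) (i : Fin 3) : (c • v) i = c * v i := rfl

lemma E3_ext {u v : E3} (h0 : u 0 = v 0) (h1 : u 1 = v 1) (h2 : u 2 = v 2) : u = v := by
  ext i; fin_cases i <;> assumption

def RotMat (θ : ℝ) : Matrix (Fin 3) (Fin 3) ℝ :=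
  !![Real.cos θ, -Real.sin θ, 0; Real.sin θ, Real.cos θ, 0; 0, 0, 1]

lemma RotMat_mul (θ φ : ℝ) : RotMat θ * RotMat φ = RotMat (θ + φ) := by
  ext i j
  fin_cases i <;> fin_cases j <;>
    simp [RotMat, Matrix.mul_apply, Fin.sum_univ_three, Matrix.vecHead, Matrix.vecTail,
      Real.cos_add, Real.sin_add] <;> ring

lemma RotMat_zero : RotMat 0 = 1 := by
  ext i j; fin_cases i <;> fin_cases j <;> simp [RotMat, Matrix.one_apply, Matrix.vecHead, Matrix.vecTail]

lemma RotMat_inv (θ : ℝ) : (RotMat θ)⁻¹ = RotMat (-θ) := by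
  apply Matrix.inv_eq_left_inv
  rw [RotMat_mul]; simp [RotMat_zero]

lemma Rot_eq_mulVec (θ : ℝ) (y : E3) :
    Rot θ y = (WithLp.equiv 2 (Fin 3 → ℝ)).symm
      ((RotMat θ).mulVec (WithLp.equiv 2 (Fin 3 → ℝ) y)) := by
  refine E3_ext ?_ ?_ ?_ <;>
    simp [Rot, RotMat, Matrix.mulVec, dotProduct, Fin.sum_univ_three] <;> ring

lemma Phi_shift (a b c θ : ℝ) : Phi (mk3 a b (c + θ)) = Scr θ (Phi (mk3 a b c)) := by
  refine E3_ext ?_ ?_ ?_ <;>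
    simp [Phi, Scr, helix, nvec, bvec, tvec, Real.cos_add, Real.sin_add] <;> ring

lemma Jh_shift (a b c θ : ℝ) :
    Jh (mk3 a b (c + θ)) = RotMat θ * Jh (mk3 a b c) := by
  ext i j
  fin_cases i <;> fin_cases j <;>
    simp [Jh, RotMat, Matrix.mul_apply, Fin.sum_univ_three, nvec, bvec, tvec,
      Real.cos_add, Real.sin_add] <;> ring

theorem helical_aux (r : ℝ) (hr : 0 < r) (hr' : r < 1 / 32)
    (Psi : E3 → E3)
    (hPsi1 : ∀ x ∈ SigmaTube r, Psi (Phi x) = x)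
    (hPsi2 : ∀ y ∈ Phi '' SigmaTube r, Phi (Psi y) = y ∧ Psi y ∈ SigmaTube r) :
    (∀ η : E3 → E3,
      (∀ x₁ x₂ z z' : ℝ, η (mk3 x₁ x₂ z) = η (mk3 x₁ x₂ z')) →
      ∀ θ : ℝ, ∀ y ∈ Phi '' SigmaTube r,
        Rot θ (Qmap Psi η y) = Qmap Psi η (Scr θ y)) ∧
    (∀ ω : E3 → E3,
      (∀ θ : ℝ, ∀ y ∈ Phi '' SigmaTube r, Rot θ (ω y) = ω (Scr θ y)) →
      ∀ x₁ x₂ z z' : ℝ, (x₁ ^ 2 + x₂ ^ 2 < (32 * r) ^ 2) →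
        Qinv ω (mk3 x₁ x₂ z) = Qinv ω (mk3 x₁ x₂ z')) := by
  constructor
  · intro η hη θ y hy
    obtain ⟨x, hx, rfl⟩ := hy
    have hxm : x = mk3 (x 0) (x 1) (x 2) := E3_ext rfl rfl rfl
    have hmem' : mk3 (x 0) (x 1) (x 2 + θ) ∈ SigmaTube r := by
      simpa [SigmaTube] using hx
    have hScr : Scr θ (Phi x) = Phi (mk3 (x 0) (x 1) (x 2 + θ)) := by
      conv_lhs => rw [hxm]
      exact (Phi_shift _ _ _ _).symm
    have h3 : Psi (Scr θ (Phi x)) = mk3 (x 0) (x 1) (x 2 + θ) := by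
      rw [hScr]; exact hPsi1 _ hmem'
    rw [Qmap, Qmap, hPsi1 x hx, h3, Rot_eq_mulVec]
    have hη' : η (mk3 (x 0) (x 1) (x 2 + θ)) = η x := by
      rw [hη (x 0) (x 1) (x 2 + θ) (x 2), ← hxm]
    have hJ : Jh (mk3 (x 0) (x 1) (x 2 + θ)) = RotMat θ * Jh x := by
      conv_rhs => rw [hxm]
      exact Jh_shift _ _ _ _
    have hD : Dh (mk3 (x 0) (x 1) (x 2 + θ)) = Dh x := rfl
    rw [hη', hJ, hD]
    congr 1
    rw [Equiv.apply_symm_apply, Matrix.mulVec_smul, Matrix.mulVec_mulVec]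
  · intro ω hω x₁ x₂ z z' hlt
    have hmem : mk3 x₁ x₂ z ∈ SigmaTube r := by simpa [SigmaTube] using hlt
    obtain ⟨θ, rfl⟩ : ∃ θ, z' = z + θ := ⟨z' - z, by ring⟩
    have hPhi : Phi (mk3 x₁ x₂ (z + θ)) = Scr θ (Phi (mk3 x₁ x₂ z)) := Phi_shift _ _ _ _
    have hω' : ω (Phi (mk3 x₁ x₂ (z + θ))) = Rot θ (ω (Phi (mk3 x₁ x₂ z))) := by
      rw [hPhi, ← hω θ _ ⟨_, hmem, rfl⟩]
    have hJ : Jh (mk3 x₁ x₂ (z + θ)) = RotMat θ * Jh (mk3 x₁ x₂ z) := Jh_shift _ _ _ _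
    have hD : Dh (mk3 x₁ x₂ (z + θ)) = Dh (mk3 x₁ x₂ z) := rfl
    rw [Qinv, Qinv, hω', hJ, hD, Matrix.mul_inv_rev, RotMat_inv, Rot_eq_mulVec]
    congr 1
    rw [Equiv.apply_symm_apply, Matrix.mulVec_mulVec, mul_assoc, RotMat_mul]
    simp [RotMat_zero]

/-- Helical symmetry is equivalent to `x₃`-independence in the
straightened frame: if `η` is independent of `x₃` then `Q_Φ η` is helical on the tube
`Γ_r = Φ(Σ_r)`; conversely if `ω` is helical on `Γ_r` then `Q_Φ⁻¹ ω` is independent of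
`x₃` on `Σ_r`. -/
theorem helical_iff_x3_independent (r : ℝ) (hr : 0 < r) (hr' : r < 1 / 32)
    (Psi : E3 → E3)
    (hPsi1 : ∀ x ∈ SigmaTube r, Psi (Phi x) = x)
    (hPsi2 : ∀ y ∈ Phi '' SigmaTube r, Phi (Psi y) = y ∧ Psi y ∈ SigmaTube r) :
    (∀ η : E3 → E3,
      (∀ x₁ x₂ z z' : ℝ, η (mk3 x₁ x₂ z) = η (mk3 x₁ x₂ z')) →
      ∀ θ : ℝ, ∀ y ∈ Phi '' SigmaTube r,
        Rot θ (Qmap Psi η y) = Qmap Psi η (Scr θ y)) ∧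
    (∀ ω : E3 → E3,
      (∀ θ : ℝ, ∀ y ∈ Phi '' SigmaTube r, Rot θ (ω y) = ω (Scr θ y)) →
      ∀ x₁ x₂ z z' : ℝ, (x₁ ^ 2 + x₂ ^ 2 < (32 * r) ^ 2) →
        Qinv ω (mk3 x₁ x₂ z) = Qinv ω (mk3 x₁ x₂ z')) :=
  helical_aux r hr hr' Psi hPsi1 hPsi2
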